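/- arXiv:2212.11797 — 6 statements merged into one kernel-verified Lean document; each statement's English description precedes it below -/
import Mathlib

section
/- For every integer n ≥ 1, the multiplication map (P, U) ↦ P * U is a homeomorphism from the product of the set of positive definite Hermitian n×n complex matrices (with its subspace topology) and the unitary group U(n) onto the group GL(n, ℂ) of invertible n×n complex matrices. (Topological form of Lemma 3.4(i).) -/
/-!
An invertible `T` factors as `T = P * U` with `P = √(T Tᴴ)` positive definite and `U = P⁻¹ T`
unitary, and this is the only such factorization: `(P U)(P U)ᴴ = P²` and a positive semidefinite
matrix has a unique positive semidefinite square root. The inverse map is continuous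
because the square root is continuous on positive semidefinite matrices (continuity of the
continuous functional calculus in a C⋆-algebra) and inversion is continuous on `GL`.
-/

open scoped ComplexOrder MatrixOrder

namespace Matrix

theorem continuousOn_nonsing_inv {K n : Type*} [Field K] [TopologicalSpace K]
    [IsTopologicalDivisionRing K] [Fintype n] [DecidableEq n] :
    ContinuousOn Inv.inv {A : Matrix n n K | IsUnit A.det} := fun A hA =>
  (continuousAt_matrix_inv A <| by
    rw [Ring.inverse_eq_inv']; exact continuousAt_inv₀ hA.ne_zero).continuousWithinAt

variable {n : Type*} [Fintype n] [DecidableEq n]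

noncomputable def polarPos (T : Matrix n n ℂ) : Matrix n n ℂ :=
  CFC.sqrt (T * Tᴴ)

noncomputable def polarUnitary (T : Matrix n n ℂ) : Matrix n n ℂ :=
  (polarPos T)⁻¹ * T

theorem posSemidef_polarPos (T : Matrix n n ℂ) : (polarPos T).PosSemidef :=
  nonneg_iff_posSemidef.mp (CFC.sqrt_nonneg _)

theorem polarPos_mul_self (T : Matrix n n ℂ) : polarPos T * polarPos T = T * Tᴴ :=
  CFC.sqrt_mul_sqrt_self _ (posSemidef_self_mul_conjTranspose T).nonneg

theorem isUnit_det_polarPos {T : Matrix n n ℂ} (hT : IsUnit T.det) :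
    IsUnit (polarPos T).det := by
  have : IsUnit ((polarPos T).det * (polarPos T).det) := by
    rw [← det_mul, polarPos_mul_self, det_mul, det_conjTranspose]
    exact hT.mul hT.star
  exact isUnit_of_mul_isUnit_left this

theorem posDef_polarPos {T : Matrix n n ℂ} (hT : IsUnit T.det) : (polarPos T).PosDef :=
  (posSemidef_polarPos T).posDef_iff_isUnit.mpr <|
    (isUnit_iff_isUnit_det _).mpr (isUnit_det_polarPos hT)

theorem polarPos_mul_polarUnitary {T : Matrix n n ℂ} (hT : IsUnit T.det) :
    polarPos T * polarUnitary T = T :=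
  mul_nonsing_inv_cancel_left _ _ (isUnit_det_polarPos hT)

theorem polarUnitary_mem_unitaryGroup {T : Matrix n n ℂ} (hT : IsUnit T.det) :
    polarUnitary T ∈ unitaryGroup n ℂ := by
  set P := polarPos T
  have hP : IsUnit P.det := isUnit_det_polarPos hT
  rw [mem_unitaryGroup_iff, star_eq_conjTranspose, polarUnitary, conjTranspose_mul,
    conjTranspose_nonsing_inv, (posSemidef_polarPos T).isHermitian.eq]
  calc P⁻¹ * T * (Tᴴ * P⁻¹) = P⁻¹ * (P * P) * P⁻¹ := by
        rw [polarPos_mul_self]; simp only [Matrix.mul_assoc]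
    _ = 1 := by
        rw [nonsing_inv_mul_cancel_left _ _ hP, mul_nonsing_inv _ hP]

theorem polarPos_mul_unitary {P U : Matrix n n ℂ} (hP : P.PosSemidef)
    (hU : U ∈ unitaryGroup n ℂ) : polarPos (P * U) = P := by
  have hUU : U * Uᴴ = 1 := mem_unitaryGroup_iff.mp hU
  rw [polarPos, conjTranspose_mul, hP.isHermitian.eq, Matrix.mul_assoc, ← Matrix.mul_assoc U,
    hUU, Matrix.one_mul]
  exact CFC.sqrt_mul_self P hP.nonneg

theorem polarUnitary_mul_unitary {P U : Matrix n n ℂ} (hP : P.PosDef)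
    (hU : U ∈ unitaryGroup n ℂ) : polarUnitary (P * U) = U := by
  rw [polarUnitary, polarPos_mul_unitary hP.posSemidef hU,
    nonsing_inv_mul_cancel_left _ _ ((isUnit_iff_isUnit_det P).mp hP.isUnit)]

theorem continuous_polarPos : Continuous (polarPos : Matrix n n ℂ → Matrix n n ℂ) := by
  -- the operator norm induces the usual topology, so the C⋆-algebra statement applies verbatim
  open scoped Matrix.Norms.L2Operator in
  exact CFC.continuousOn_sqrt.comp_continuous (by fun_prop)
    fun T => (posSemidef_self_mul_conjTranspose T).nonneg

theorem continuousOn_polarUnitary :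
    ContinuousOn (polarUnitary : Matrix n n ℂ → Matrix n n ℂ) {T | IsUnit T.det} :=
  (continuousOn_nonsing_inv.comp continuous_polarPos.continuousOn
    fun _ hT => isUnit_det_polarPos hT).mul continuousOn_id

noncomputable def polarHomeomorph :
    ({P : Matrix n n ℂ // P.PosDef} × unitaryGroup n ℂ) ≃ₜ
      {T : Matrix n n ℂ // IsUnit T.det} where
  toFun p := ⟨p.1 * p.2, by
    rw [det_mul]
    exact ((isUnit_iff_isUnit_det _).mp p.1.2.isUnit).mul (UnitaryGroup.det_isUnit p.2)⟩
  invFun T :=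
    (⟨polarPos T, posDef_polarPos T.2⟩, ⟨polarUnitary T, polarUnitary_mem_unitaryGroup T.2⟩)
  left_inv p := Prod.ext (Subtype.ext (polarPos_mul_unitary p.1.2.posSemidef p.2.2))
    (Subtype.ext (polarUnitary_mul_unitary p.1.2 p.2.2))
  right_inv T := Subtype.ext (polarPos_mul_polarUnitary T.2)
  continuous_toFun := by fun_prop
  continuous_invFun :=
    ((continuous_polarPos.comp continuous_subtype_val).subtype_mk _).prodMk
      ((continuousOn_polarUnitary.comp_continuous continuous_subtype_val
        fun T => T.2).subtype_mk _)

end Matrix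

theorem polar_decomposition_homeomorph_general (n : ℕ) :
    ∃ h : ({P : Matrix (Fin n) (Fin n) ℂ // P.PosDef} × Matrix.unitaryGroup (Fin n) ℂ) ≃ₜ
        {T : Matrix (Fin n) (Fin n) ℂ // IsUnit T.det},
      ∀ (P : {P : Matrix (Fin n) (Fin n) ℂ // P.PosDef})
        (U : Matrix.unitaryGroup (Fin n) ℂ),
        (h (P, U) : Matrix (Fin n) (Fin n) ℂ) =
          (P : Matrix (Fin n) (Fin n) ℂ) * (U : Matrix (Fin n) (Fin n) ℂ) :=
  ⟨Matrix.polarHomeomorph, fun _ _ => rfl⟩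

/-- **Topological polar decomposition** (Lemma 3.4(i)): the multiplication map
`(P, U) ↦ P * U` is a homeomorphism from the product of the space of positive definite
Hermitian `n × n` complex matrices and the unitary group `U(n)` onto the space of
invertible `n × n` complex matrices (each with its subspace topology). -/
theorem polar_decomposition_homeomorph (n : ℕ) (hn : 1 ≤ n) :
    ∃ h : ({P : Matrix (Fin n) (Fin n) ℂ // P.PosDef} × Matrix.unitaryGroup (Fin n) ℂ) ≃ₜ
        {T : Matrix (Fin n) (Fin n) ℂ // IsUnit T.det},
      ∀ (P : {P : Matrix (Fin n) (Fin n) ℂ // P.PosDef})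
        (U : Matrix.unitaryGroup (Fin n) ℂ),
        (h (P, U) : Matrix (Fin n) (Fin n) ℂ) =
          (P : Matrix (Fin n) (Fin n) ℂ) * (U : Matrix (Fin n) (Fin n) ℂ) :=
  polar_decomposition_homeomorph_general n
end

section
/- For every integer n ≥ 1, there is a homeomorphism from the set of Hermitian n×n complex matrices (with its subspace topology) onto the set of positive definite Hermitian n×n complex matrices (with its subspace topology) whose underlying map is the matrix exponential M ↦ exp(M). (Topological form of the claim in Definition 3.3 that exponentiation is a diffeomorphism with inverse i·log.) -/
/-!
With the L2 operator norm, complex matrices form a C⋆-algebra, so the continuous functional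
calculus is available. The exponential of a Hermitian matrix is a nonnegative unit, i.e. positive
definite, and the CFC logarithm inverts it on both sides. The logarithm is continuous on the
self-adjoint units because `Real.log` is continuous on a neighbourhood of their spectra, which
avoid `0`.
-/

open scoped ComplexOrder

namespace Matrix

-- The L2 operator norm induces the product topology, so the homeomorphism below is one for the
-- standard topology on matrices.
open scoped Matrix.Norms.L2Operator MatrixOrder

variable {ι : Type*} [Fintype ι] [DecidableEq ι]

lemma IsHermitian.posDef_exp {A : Matrix ι ι ℂ} (hA : A.IsHermitian) :
    (NormedSpace.exp A).PosDef :=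
  isStrictlyPositive_iff_posDef.1 <| (isUnit_exp A).isStrictlyPositive hA.isSelfAdjoint.exp_nonneg

lemma IsHermitian.log_exp {A : Matrix ι ι ℂ} (hA : A.IsHermitian) :
    CFC.log (NormedSpace.exp A) = A :=
  CFC.log_exp A hA.isSelfAdjoint

lemma PosDef.exp_log {A : Matrix ι ι ℂ} (hA : A.PosDef) :
    NormedSpace.exp (CFC.log A) = A :=
  CFC.exp_log A hA.isStrictlyPositive

lemma continuous_exp : Continuous (NormedSpace.exp : Matrix ι ι ℂ → Matrix ι ι ℂ) :=
  continuous_iff_continuousAt.2 fun A ↦ (NormedSpace.exp_analytic (𝕂 := ℂ) A).continuousAt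

lemma continuousOn_log : ContinuousOn CFC.log {A : Matrix ι ι ℂ | A.PosDef} :=
  CFC.continuousOn_log.mono fun _ hA ↦
    ⟨hA.isHermitian.isSelfAdjoint, hA.isStrictlyPositive.isUnit⟩

noncomputable def expHomeomorphPosDef :
    {A : Matrix ι ι ℂ // A.IsHermitian} ≃ₜ {A : Matrix ι ι ℂ // A.PosDef} where
  toFun A := ⟨NormedSpace.exp A.1, A.2.posDef_exp⟩
  invFun A := ⟨CFC.log A.1, IsSelfAdjoint.log⟩
  left_inv A := Subtype.ext A.2.log_exp
  right_inv A := Subtype.ext A.2.exp_log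
  continuous_toFun := (continuous_exp.comp continuous_subtype_val).subtype_mk _
  continuous_invFun :=
    (continuousOn_log.comp_continuous continuous_subtype_val fun A ↦ A.2).subtype_mk _

end Matrix

theorem exp_homeomorph_hermitian_posDef_general (n : ℕ) :
    ∃ h : {A : Matrix (Fin n) (Fin n) ℂ // A.IsHermitian} ≃ₜ
        {A : Matrix (Fin n) (Fin n) ℂ // A.PosDef},
      ∀ A : {A : Matrix (Fin n) (Fin n) ℂ // A.IsHermitian},
        (h A : Matrix (Fin n) (Fin n) ℂ) = NormedSpace.exp (A : Matrix (Fin n) (Fin n) ℂ) :=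
  ⟨Matrix.expHomeomorphPosDef, fun _ ↦ rfl⟩

/-- **Topological form of the exponential/logarithm correspondence** (Definition 3.3):
there is a homeomorphism from the space of Hermitian `n × n` complex matrices onto the
space of positive definite Hermitian matrices (both with subspace topology) whose
underlying map is the matrix exponential. -/
theorem exp_homeomorph_hermitian_posDef (n : ℕ) (hn : 1 ≤ n) :
    ∃ h : {A : Matrix (Fin n) (Fin n) ℂ // A.IsHermitian} ≃ₜ
        {A : Matrix (Fin n) (Fin n) ℂ // A.PosDef},
      ∀ A : {A : Matrix (Fin n) (Fin n) ℂ // A.IsHermitian},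
        (h A : Matrix (Fin n) (Fin n) ℂ) = NormedSpace.exp (A : Matrix (Fin n) (Fin n) ℂ) :=
  exp_homeomorph_hermitian_posDef_general n
end

section
/- Let n ≥ 1 and let (T_ν) be a sequence of invertible complex n×n matrices such that the sequence T_ν * (T_ν)ᴴ converges (in the space of matrices) to a positive definite Hermitian matrix P. Then there exist a strictly increasing function φ : ℕ → ℕ and an invertible complex n×n matrix T such that T_{φ(ν)} converges to T. (The compactness step in the proof of Lemma 4.9: properness of the projection GL → GL/U(n) implies that a sequence whose polar parts converge has a convergent subsequence.) -/
open scoped ComplexOrder Matrix Topology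

/-! Boundedness comes from the C⋆-identity `‖x * x⋆‖ = ‖x‖ ^ 2` for the operator norm on matrices,
so Bolzano–Weierstrass gives a convergent subsequence. Its limit `L` satisfies `L * Lᴴ = P`, hence
is invertible because `P` is. -/

open Bornology Filter Set

section CStarRing

variable {E : Type*} [NonUnitalNormedRing E] [StarRing E] [CStarRing E]

theorem CStarRing.isBounded_range_of_tendsto_mul_star {x : ℕ → E} {p : E}
    (h : Tendsto (fun k => x k * star (x k)) atTop (𝓝 p)) : IsBounded (range x) := by
  obtain ⟨C, hC⟩ := isBounded_iff_forall_norm_le.mp (Metric.isBounded_range_of_tendsto _ h)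
  refine isBounded_iff_forall_norm_le.mpr ⟨√C, ?_⟩
  rintro _ ⟨k, rfl⟩
  apply Real.le_sqrt_of_sq_le
  rw [sq, ← CStarRing.norm_self_mul_star]
  exact hC _ ⟨k, rfl⟩

theorem CStarRing.exists_subseq_tendsto_of_tendsto_mul_star [ProperSpace E] {x : ℕ → E} {p : E}
    (h : Tendsto (fun k => x k * star (x k)) atTop (𝓝 p)) :
    ∃ a, a * star a = p ∧ ∃ φ : ℕ → ℕ, StrictMono φ ∧ Tendsto (x ∘ φ) atTop (𝓝 a) := by
  obtain ⟨a, -, φ, hφ, hxa⟩ :=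
    tendsto_subseq_of_bounded (isBounded_range_of_tendsto_mul_star h) (mem_range_self (f := x))
  have hmul : Tendsto (fun k => x (φ k) * star (x (φ k))) atTop (𝓝 (a * star a)) :=
    hxa.mul hxa.star
  exact ⟨a, tendsto_nhds_unique hmul (h.comp hφ.tendsto_atTop), φ, hφ, hxa⟩

end CStarRing

theorem Matrix.isUnit_det_of_posDef_mul_conjTranspose {n K : Type*} [Fintype n] [DecidableEq n]
    [Field K] [PartialOrder K] [StarRing K] {L : Matrix n n K} (h : (L * Lᴴ).PosDef) :
    IsUnit L.det := by
  have hdet := (Matrix.isUnit_iff_isUnit_det _).mp h.isUnit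
  rw [Matrix.det_mul] at hdet
  exact isUnit_of_mul_isUnit_left hdet

theorem subseq_converges_of_polar_parts_converge_general (n : ℕ)
    (T : ℕ → Matrix (Fin n) (Fin n) ℂ)
    (P : Matrix (Fin n) (Fin n) ℂ) (hP : P.PosDef)
    (hconv : Filter.Tendsto (fun ν => T ν * (T ν)ᴴ) Filter.atTop (𝓝 P)) :
    ∃ φ : ℕ → ℕ, StrictMono φ ∧
      ∃ L : Matrix (Fin n) (Fin n) ℂ, IsUnit L.det ∧
        Filter.Tendsto (fun ν => T (φ ν)) Filter.atTop (𝓝 L) := by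
  -- The operator-norm metric is built to induce the product topology, so `𝓝` agrees definitionally.
  open scoped Matrix.Norms.L2Operator in
  obtain ⟨L, hLP, φ, hφ, hTL⟩ := CStarRing.exists_subseq_tendsto_of_tendsto_mul_star hconv
  exact ⟨φ, hφ, L, Matrix.isUnit_det_of_posDef_mul_conjTranspose (hLP ▸ hP), hTL⟩

/-- **Compactness step in the proof of Lemma 4.9**: if `(T ν)` is a sequence of invertible
complex `n × n` matrices such that `T ν * (T ν)ᴴ` converges to a positive definite
Hermitian matrix `P`, then some subsequence of `(T ν)` converges to an invertible matrix. -/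
theorem subseq_converges_of_polar_parts_converge (n : ℕ) (hn : 1 ≤ n)
    (T : ℕ → Matrix (Fin n) (Fin n) ℂ) (hT : ∀ ν, IsUnit (T ν).det)
    (P : Matrix (Fin n) (Fin n) ℂ) (hP : P.PosDef)
    (hconv : Filter.Tendsto (fun ν => T ν * (T ν)ᴴ) Filter.atTop (𝓝 P)) :
    ∃ φ : ℕ → ℕ, StrictMono φ ∧
      ∃ L : Matrix (Fin n) (Fin n) ℂ, IsUnit L.det ∧
        Filter.Tendsto (fun ν => T (φ ν)) Filter.atTop (𝓝 L) :=
  subseq_converges_of_polar_parts_converge_general n T P hP hconv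
end

section
/- Let (t_n) be a sequence of nonzero complex numbers with t_n → 0, and for each n let g_n : ℂ → ℂ be complex differentiable on the closed annulus {z ∈ ℂ : |t_n| ≤ |z| ≤ 1}. Let A = {z ∈ ℂ : 1/2 ≤ |z| ≤ 1}. Suppose the sequence (g_n) converges uniformly on A to the zero function, and the sequence of functions w ↦ g_n(t_n / w) converges uniformly on A to the zero function. Then the sup-norms of g_n on the full annuli tend to zero: for every ε > 0 there exists N such that for all n ≥ N and all z with |t_n| ≤ |z| ≤ 1 one has |g_n(z)| ≤ ε. (The last assertion of Lemma B.8, proved via the maximum principle on each annulus.) -/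
/-!
On each annulus `‖t n‖ ≤ ‖z‖ ≤ 1` the maximum principle bounds `‖g n‖` by its maximum on the two
boundary circles. The outer circle lies in `A`, and the inner circle is the image of the unit
circle, which also lies in `A`, under `w ↦ t n / w`; so both boundary maxima are controlled by the
two uniform convergence hypotheses at the same time.
-/

open Filter Set

theorem frontier_setOf_le_norm_and_norm_le_subset {E : Type*} [SeminormedAddGroup E] (r R : ℝ) :
    frontier {z : E | r ≤ ‖z‖ ∧ ‖z‖ ≤ R} ⊆ {z | ‖z‖ = r ∨ ‖z‖ = R} :=
  (continuous_norm.frontier_preimage_subset (Icc r R)).trans fun z hz => by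
    show ‖z‖ = r ∨ ‖z‖ = R
    rw [mem_preimage, isClosed_Icc.frontier_eq, interior_Icc] at hz
    obtain ⟨⟨hr, hR⟩, hnot⟩ := hz
    by_contra! hne
    exact hnot ⟨hr.lt_of_ne hne.1.symm, hR.lt_of_ne hne.2⟩

theorem Complex.norm_le_of_forall_norm_eq_or_norm_eq_norm_le
    {E F : Type*} [NormedAddCommGroup E] [NormedSpace ℂ E] [Nontrivial E]
    [NormedAddCommGroup F] [NormedSpace ℂ F] {f : E → F} {r R C : ℝ}
    (hf : DifferentiableOn ℂ f {z | r ≤ ‖z‖ ∧ ‖z‖ ≤ R})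
    (hC : ∀ z : E, ‖z‖ = r ∨ ‖z‖ = R → ‖f z‖ ≤ C) {z : E} (hz : r ≤ ‖z‖ ∧ ‖z‖ ≤ R) :
    ‖f z‖ ≤ C := by
  have hclosed : IsClosed {z : E | r ≤ ‖z‖ ∧ ‖z‖ ≤ R} := isClosed_Icc.preimage continuous_norm
  have hbdd : Bornology.IsBounded {z : E | r ≤ ‖z‖ ∧ ‖z‖ ≤ R} :=
    (Metric.isBounded_closedBall (x := (0 : E)) (r := R)).subset fun w hw => by
      simpa using hw.2
  refine Complex.norm_le_of_forall_mem_frontier_norm_le hbdd ?_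
    (fun w hw => hC w (frontier_setOf_le_norm_and_norm_le_subset r R hw)) (subset_closure hz)
  exact DifferentiableOn.diffContOnCl (by rwa [hclosed.closure_eq])

theorem TendstoUniformlyOn.eventually_forall_norm_lt {ι α β : Type*} [SeminormedAddGroup β]
    {F : ι → α → β} {p : Filter ι} {s : Set α} (h : TendstoUniformlyOn F 0 p s) {ε : ℝ}
    (hε : 0 < ε) : ∀ᶠ n in p, ∀ z ∈ s, ‖F n z‖ < ε :=
  (Metric.tendstoUniformlyOn_iff.mp h ε hε).mono fun _ hn z hz => by simpa using hn z hz

theorem Complex.exists_norm_eq_one_and_div_eq {t w : ℂ} (h : ‖w‖ = ‖t‖) :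
    ∃ u : ℂ, ‖u‖ = 1 ∧ t / u = w := by
  rcases eq_or_ne w 0 with rfl | hw
  · exact ⟨1, norm_one, by simpa using h.symm⟩
  have ht : t ≠ 0 := norm_ne_zero_iff.mp (h ▸ norm_ne_zero_iff.mpr hw)
  exact ⟨t / w, by rw [norm_div, h, div_self (norm_ne_zero_iff.mpr ht)], div_div_cancel₀ ht⟩

theorem degenerating_annuli_sup_norm_to_zero_general
    (t : ℕ → ℂ)
    (g : ℕ → ℂ → ℂ)
    (hg : ∀ n, DifferentiableOn ℂ (g n) {z : ℂ | ‖t n‖ ≤ ‖z‖ ∧ ‖z‖ ≤ 1})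
    (hF : TendstoUniformlyOn g 0 Filter.atTop
      {z : ℂ | 1/2 ≤ ‖z‖ ∧ ‖z‖ ≤ 1})
    (hG : TendstoUniformlyOn (fun n w => g n (t n / w)) 0 Filter.atTop
      {z : ℂ | 1/2 ≤ ‖z‖ ∧ ‖z‖ ≤ 1}) :
    ∀ ε > (0 : ℝ), ∃ N : ℕ, ∀ n ≥ N, ∀ z : ℂ,
      ‖t n‖ ≤ ‖z‖ → ‖z‖ ≤ 1 →
        ‖g n z‖ ≤ ε := by
  intro ε hε
  have unit_circle_mem {u : ℂ} (hu : ‖u‖ = 1) : 1 / 2 ≤ ‖u‖ ∧ ‖u‖ ≤ 1 := by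
    rw [hu]; norm_num
  obtain ⟨N, hN⟩ := eventually_atTop.mp
    ((hF.eventually_forall_norm_lt hε).and (hG.eventually_forall_norm_lt hε))
  refine ⟨N, fun n hn z hz₁ hz₂ => ?_⟩
  obtain ⟨houter, hinner⟩ := hN n hn
  refine Complex.norm_le_of_forall_norm_eq_or_norm_eq_norm_le (hg n) (fun w hw => ?_) ⟨hz₁, hz₂⟩
  rcases hw with hw | hw
  · obtain ⟨u, hu, rfl⟩ := Complex.exists_norm_eq_one_and_div_eq hw
    exact (hinner u (unit_circle_mem hu)).le
  · exact (houter w (unit_circle_mem hw)).le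

/-- **Last assertion of Lemma B.8**: if `g n` is holomorphic on the annulus
`|t n| ≤ |z| ≤ 1` with `t n → 0`, and both `g n` and `w ↦ g n (t n / w)` converge
uniformly to `0` on `A = {1/2 ≤ |z| ≤ 1}`, then the sup-norms of `g n` on the full
annuli tend to zero (via the maximum principle). -/
theorem degenerating_annuli_sup_norm_to_zero
    (t : ℕ → ℂ) (ht0 : ∀ n, t n ≠ 0) (htlim : Filter.Tendsto t Filter.atTop (nhds 0))
    (g : ℕ → ℂ → ℂ)
    (hg : ∀ n, DifferentiableOn ℂ (g n) {z : ℂ | ‖t n‖ ≤ ‖z‖ ∧ ‖z‖ ≤ 1})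
    (hF : TendstoUniformlyOn g 0 Filter.atTop
      {z : ℂ | 1/2 ≤ ‖z‖ ∧ ‖z‖ ≤ 1})
    (hG : TendstoUniformlyOn (fun n w => g n (t n / w)) 0 Filter.atTop
      {z : ℂ | 1/2 ≤ ‖z‖ ∧ ‖z‖ ≤ 1}) :
    ∀ ε > (0 : ℝ), ∃ N : ℕ, ∀ n ≥ N, ∀ z : ℂ,
      ‖t n‖ ≤ ‖z‖ → ‖z‖ ≤ 1 →
        ‖g n z‖ ≤ ε :=
  degenerating_annuli_sup_norm_to_zero_general t g hg hF hG
end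

section
/- Let z₀ ∈ ℂ with |z₀| < 1, let U ⊆ ℂ be an open set containing the closed unit disc, and let ψ : ℂ → ℂ be complex differentiable on U with ψ(z) ≠ 0 for every z in the closed unit disc. Define φ : ℂ → ℂ by φ(z) = (z − z₀) · ψ(z). Then the circle integral over the unit circle satisfies ∮_{|ζ|=1} ζ · φ'(ζ)/φ(ζ) dζ = 2πi · z₀. (The residue-theorem formula, used in the proof of Proposition 5.5, expressing the unique simple zero of a holomorphic function inside the unit disc as a contour integral.) -/
open Complex Metric

/-!
Since `φ = (z - z₀) ψ`, the logarithmic derivative splits as `φ'/φ = 1/(z - z₀) + ψ'/ψ`.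
The function `ζ ψ'(ζ)/ψ(ζ)` is holomorphic on the closed disc, so its circle integral vanishes
by Cauchy–Goursat, while `∮ ζ/(ζ - z₀) dζ = 2πi z₀` is the Cauchy integral formula for the
identity.
-/

theorem logDeriv_sub_const_mul {𝕜 : Type*} [NontriviallyNormedField 𝕜] {f : 𝕜 → 𝕜} {a x : 𝕜}
    (hx : x ≠ a) (hfx : f x ≠ 0) (hf : DifferentiableAt 𝕜 f x) :
    logDeriv (fun z => (z - a) * f z) x = (x - a)⁻¹ + logDeriv f x := by
  rw [logDeriv_mul (f := (· - a)) x (sub_ne_zero.2 hx) hfx (by fun_prop) hf]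
  simp [logDeriv_apply]

theorem differentiableOn_logDeriv {U s : Set ℂ} {f : ℂ → ℂ} (hU : IsOpen U)
    (hf : DifferentiableOn ℂ f U) (hsU : s ⊆ U) (hf0 : ∀ z ∈ s, f z ≠ 0) :
    DifferentiableOn ℂ (logDeriv f) s :=
  ((hf.deriv hU).mono hsU).div (hf.mono hsU) hf0

theorem DifferentiableOn.circleIntegral_eq_zero {E : Type*} [NormedAddCommGroup E]
    [NormedSpace ℂ E] {f : ℂ → E} {c : ℂ} {R : ℝ} (hR : 0 ≤ R)
    (hf : DifferentiableOn ℂ f (closedBall c R)) : ∮ z in C(c, R), f z = 0 :=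
  (hf.mono closure_ball_subset_closedBall).diffContOnCl.circleIntegral_eq_zero hR

/-- **Residue-theorem formula from the proof of Proposition 5.5**: if `φ(z) = (z - z₀)ψ(z)`
with `ψ` holomorphic and nonvanishing on the closed unit disc and `|z₀| < 1`, then the
contour integral `∮_{|ζ|=1} ζ φ'(ζ)/φ(ζ) dζ` recovers the zero: it equals `2πi·z₀`. -/
theorem circleIntegral_zero_counting (z₀ : ℂ) (hz₀ : ‖z₀‖ < 1)
    (U : Set ℂ) (hU : IsOpen U) (hUball : Metric.closedBall (0 : ℂ) 1 ⊆ U)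
    (ψ : ℂ → ℂ) (hψ : DifferentiableOn ℂ ψ U)
    (hψ0 : ∀ z ∈ Metric.closedBall (0 : ℂ) 1, ψ z ≠ 0)
    (φ : ℂ → ℂ) (hφ : ∀ z : ℂ, φ z = (z - z₀) * ψ z) :
    circleIntegral (fun ζ => ζ * deriv φ ζ / φ ζ) 0 1 = 2 * Real.pi * Complex.I * z₀ := by
  obtain rfl : φ = fun z => (z - z₀) * ψ z := funext hφ
  have hz₀_ball : z₀ ∈ ball (0 : ℂ) 1 := mem_ball_zero_iff.2 hz₀
  have hne : ∀ ζ ∈ sphere (0 : ℂ) 1, ζ ≠ z₀ := fun ζ hζ =>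
    ne_of_mem_of_not_mem hζ (sphere_disjoint_ball.ne_of_mem · hz₀_ball rfl)
  have hlog : DifferentiableOn ℂ (fun ζ => ζ * logDeriv ψ ζ) (closedBall 0 1) :=
    differentiableOn_id.mul (differentiableOn_logDeriv hU hψ hUball hψ0)
  have hsplit : Set.EqOn (fun ζ => ζ * deriv (fun z => (z - z₀) * ψ z) ζ / ((ζ - z₀) * ψ ζ))
      (fun ζ => (ζ - z₀)⁻¹ • ζ + ζ * logDeriv ψ ζ) (sphere 0 1) := by
    intro ζ hζ
    have hζ' : ζ ∈ closedBall (0 : ℂ) 1 := sphere_subset_closedBall hζ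
    have hψζ : DifferentiableAt ℂ ψ ζ := hψ.differentiableAt (hU.mem_nhds (hUball hζ'))
    dsimp only
    rw [mul_div_assoc, ← logDeriv_apply, logDeriv_sub_const_mul (hne ζ hζ) (hψ0 ζ hζ') hψζ,
      smul_eq_mul]
    ring
  have hint : CircleIntegrable (fun ζ => (ζ - z₀)⁻¹ • ζ) 0 1 :=
    ((continuousOn_id.sub continuousOn_const).inv₀ fun ζ hζ => sub_ne_zero.2 (hne ζ hζ)).smul
      continuousOn_id |>.circleIntegrable zero_le_one
  rw [circleIntegral.integral_congr zero_le_one hsplit,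
    circleIntegral.integral_add hint (hlog.continuousOn.mono sphere_subset_closedBall
      |>.circleIntegrable zero_le_one),
    DifferentiableOn.circleIntegral_sub_inv_smul (f := fun z => z) differentiableOn_id hz₀_ball,
    hlog.circleIntegral_eq_zero zero_le_one, smul_eq_mul, add_zero]
end

section
/- There exists a function L : ℂ × ℂ × ℂ → ℂ which is complex differentiable on the open set S = {(w, ξ₁, ξ₂) : 1/2 < |w| < 1, |ξ₁| < 1/2, |ξ₂| < 1/2}, such that exp(L(w, ξ₁, ξ₂)) = (w − ξ₁)/(w − ξ₂) for every (w, ξ₁, ξ₂) ∈ S, and L(w, ξ, ξ) = 0 whenever (w, ξ, ξ) ∈ S. (The holomorphic logarithm with parameters constructed in the proof of Lemma A.7, which exists because the function (w − ξ₁)/(w − ξ₂) has winding number zero on the annulus.) -/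
open Complex

/- `(w - ξ₁)/(w - ξ₂) = (1 - ξ₁/w)/(1 - ξ₂/w)`, and for `|ξ| < |w|` the factor `1 - ξ/w` lies in the
disc `|z - 1| < 1`, where the principal logarithm is holomorphic; so the difference of the two
principal logarithms is the required `L`, and it vanishes identically on `ξ₁ = ξ₂`. -/

lemma one_sub_div_mem_slitPlane {w ξ : ℂ} (h : ‖ξ‖ < ‖w‖) : 1 - ξ / w ∈ slitPlane := by
  have hlt : ‖-(ξ / w)‖ < 1 := by
    rw [norm_neg, norm_div]
    exact (div_lt_one ((norm_nonneg ξ).trans_lt h)).2 h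
  simpa only [sub_eq_add_neg] using mem_slitPlane_of_norm_lt_one hlt

lemma differentiableAt_log_one_sub_div {E : Type*} [NormedAddCommGroup E] [NormedSpace ℂ E]
    {w ξ : E → ℂ} {x : E} (hw : DifferentiableAt ℂ w x) (hξ : DifferentiableAt ℂ ξ x)
    (h : ‖ξ x‖ < ‖w x‖) : DifferentiableAt ℂ (fun y => log (1 - ξ y / w y)) x := by
  have hw0 : w x ≠ 0 := norm_pos_iff.1 ((norm_nonneg _).trans_lt h)
  simp only [div_eq_mul_inv]
  exact ((hξ.fun_mul (hw.fun_inv hw0)).const_sub 1).clog (one_sub_div_mem_slitPlane h)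

lemma exp_log_one_sub_div_sub {w ξ₁ ξ₂ : ℂ} (h₁ : ‖ξ₁‖ < ‖w‖) (h₂ : ‖ξ₂‖ < ‖w‖) :
    exp (log (1 - ξ₁ / w) - log (1 - ξ₂ / w)) = (w - ξ₁) / (w - ξ₂) := by
  have hw : w ≠ 0 := norm_pos_iff.1 ((norm_nonneg _).trans_lt h₁)
  rw [exp_sub, exp_log (slitPlane_ne_zero (one_sub_div_mem_slitPlane h₁)),
    exp_log (slitPlane_ne_zero (one_sub_div_mem_slitPlane h₂))]
  field_simp

/-- **Holomorphic logarithm with parameters from the proof of Lemma A.7**: on the region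
`S = {(w, ξ₁, ξ₂) : 1/2 < |w| < 1, |ξ₁| < 1/2, |ξ₂| < 1/2}` there is a holomorphic
function `L` with `exp (L (w, ξ₁, ξ₂)) = (w - ξ₁)/(w - ξ₂)` which vanishes whenever
`ξ₁ = ξ₂`. -/
theorem exists_holomorphic_log_with_parameters :
    ∃ L : ℂ × ℂ × ℂ → ℂ,
      DifferentiableOn ℂ L
        {p : ℂ × ℂ × ℂ | 1/2 < ‖p.1‖ ∧ ‖p.1‖ < 1 ∧
          ‖p.2.1‖ < 1/2 ∧ ‖p.2.2‖ < 1/2} ∧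
      (∀ w ξ₁ ξ₂ : ℂ, 1/2 < ‖w‖ → ‖w‖ < 1 →
        ‖ξ₁‖ < 1/2 → ‖ξ₂‖ < 1/2 →
          Complex.exp (L (w, ξ₁, ξ₂)) = (w - ξ₁) / (w - ξ₂)) ∧
      (∀ w ξ : ℂ, 1/2 < ‖w‖ → ‖w‖ < 1 → ‖ξ‖ < 1/2 →
        L (w, ξ, ξ) = 0) := by
  refine ⟨fun p => log (1 - p.2.1 / p.1) - log (1 - p.2.2 / p.1), ?_, ?_,
    fun _ _ _ _ _ => sub_self _⟩
  · rintro p ⟨hw, -, hξ₁, hξ₂⟩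
    have hfst : DifferentiableAt ℂ (fun q : ℂ × ℂ × ℂ => q.1) p := differentiableAt_fst
    have hlog₁ := differentiableAt_log_one_sub_div hfst differentiableAt_snd.fst (by linarith)
    have hlog₂ := differentiableAt_log_one_sub_div hfst differentiableAt_snd.snd (by linarith)
    exact (hlog₁.sub hlog₂).differentiableWithinAt
  · intro w ξ₁ ξ₂ hw _ hξ₁ hξ₂
    exact exp_log_one_sub_div_sub (by linarith) (by linarith)
end
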